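/- arXiv:1505.04818 — 2 statements merged into one kernel-verified Lean document; each statement's English description precedes it below -/
import Mathlib

section
/- Let Q be a Poincaré duality CDGA in dimension n − 2k (with k ≥ 1), and let e ∈ Q^{2k} be a cocycle (d(e) = 0). Let z̄ be a generator of even degree 2k and define P := (Q ⊗ Λz̄)/(z̄² − e·z̄) with differential extending d_Q and D(z̄) = 0 (this is well defined since d(z̄² − e z̄) lies in the ideal (z̄² − e z̄)). Then P is a Poincaré duality CDGA in dimension n; as graded vector spaces P ≅ Q ⊕ z̄·Q. -/
/-!
Common framework: commutative differential graded algebras (CDGAs) over `ℚ`,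
differential graded modules, linear duals (represented via perfect pairings),
mapping cones with their semi-trivial multiplication, Poincaré duality CDGAs,
orientations, orphans, and Sullivan extensions.

A CDGA over `ℚ` is presented as a (possibly non-commutative) ring `A` which is a
`ℚ`-algebra, together with an internal `ℕ`-grading by `ℚ`-subspaces for which
`A` is the internal direct sum of the pieces, such that the product is graded
(with graded commutativity `a·b = (-1)^{|a||b|} b·a`), and a degree `+1`
`ℚ`-linear differential squaring to zero and satisfying the Leibniz rule.
-/

noncomputable section

structure CDGAStruct (A : Type) [Ring A] [Algebra ℚ A] : Type where
  gr : ℕ → Submodule ℚ A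
  internal : DirectSum.IsInternal gr
  one_mem : (1 : A) ∈ gr 0
  mul_mem : ∀ {i j : ℕ} {a b : A}, a ∈ gr i → b ∈ gr j → a * b ∈ gr (i + j)
  gcomm : ∀ {i j : ℕ} {a b : A}, a ∈ gr i → b ∈ gr j →
    a * b = ((-1 : ℚ) ^ (i * j)) • (b * a)
  d : A →ₗ[ℚ] A
  d_mem : ∀ {i : ℕ} {a : A}, a ∈ gr i → d a ∈ gr (i + 1)
  d_sq : ∀ a : A, d (d a) = 0
  leibniz : ∀ {i : ℕ} (a b : A), a ∈ gr i →
    d (a * b) = d a * b + ((-1 : ℚ) ^ i) • (a * d b)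

namespace CDGAStruct

variable {A : Type} [Ring A] [Algebra ℚ A]

/-- The grading of a CDGA extended to `ℤ` (zero in negative degrees). -/
def grZ (SA : CDGAStruct A) : ℤ → Submodule ℚ A :=
  fun j => if 0 ≤ j then SA.gr j.toNat else ⊥

/-- A CDGA is connected if `A⁰ = ℚ·1 ≅ ℚ`. -/
def Connected (SA : CDGAStruct A) : Prop :=
  ∀ a ∈ SA.gr 0, ∃! q : ℚ, a = q • (1 : A)

/-- A CDGA is of finite type if each graded piece is finite dimensional. -/
def FiniteType (SA : CDGAStruct A) : Prop :=
  ∀ i : ℕ, FiniteDimensional ℚ (SA.gr i)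

end CDGAStruct

/-- A morphism of CDGAs: a `ℚ`-linear map which is unital, multiplicative,
preserves the gradings and commutes with the differentials. -/
def IsCDGAHom {A B : Type} [Ring A] [Algebra ℚ A] [Ring B] [Algebra ℚ B]
    (SA : CDGAStruct A) (SB : CDGAStruct B) (f : A →ₗ[ℚ] B) : Prop :=
  f 1 = 1 ∧ (∀ a a' : A, f (a * a') = f a * f a') ∧
    (∀ i : ℕ, ∀ a ∈ SA.gr i, f a ∈ SB.gr i) ∧ ∀ a, f (SA.d a) = SB.d (f a)

/-- A differential graded module (`ℤ`-graded) over the CDGA `(A, SA)`. -/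
structure DGModStruct {A : Type} [Ring A] [Algebra ℚ A] (SA : CDGAStruct A)
    (M : Type) [AddCommGroup M] [Module ℚ M] : Type where
  gr : ℤ → Submodule ℚ M
  internal : DirectSum.IsInternal gr
  smul : A →ₗ[ℚ] M →ₗ[ℚ] M
  one_smul : ∀ m : M, smul 1 m = m
  mul_smul : ∀ (a b : A) (m : M), smul (a * b) m = smul a (smul b m)
  smul_mem : ∀ {i : ℕ} {j : ℤ} {a : A} {m : M},
    a ∈ SA.gr i → m ∈ gr j → smul a m ∈ gr (i + j)
  d : M →ₗ[ℚ] M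
  d_mem : ∀ {j : ℤ} {m : M}, m ∈ gr j → d m ∈ gr (j + 1)
  d_sq : ∀ m : M, d (d m) = 0
  leibniz : ∀ {i : ℕ} (a : A) (m : M), a ∈ SA.gr i →
    d (smul a m) = smul (SA.d a) m + ((-1 : ℚ) ^ i) • smul a (d m)

/-- `SM` is the tautological dg-module structure of a CDGA over itself. -/
def IsSelfMod {A : Type} [Ring A] [Algebra ℚ A] (SA : CDGAStruct A)
    (SM : DGModStruct SA A) : Prop :=
  (∀ j : ℤ, SM.gr j = SA.grZ j) ∧ (∀ a b : A, SM.smul a b = a * b) ∧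
    ∀ a : A, SM.d a = SA.d a

/-- `SMA` is the `A`-dg-module structure induced from the `B`-dg-module
structure `SMB` by restriction along the CDGA morphism `φ : A → B`. -/
def IsModViaHom {A B : Type} [Ring A] [Algebra ℚ A] [Ring B] [Algebra ℚ B]
    (SA : CDGAStruct A) (SB : CDGAStruct B) (φ : A →ₗ[ℚ] B)
    {M : Type} [AddCommGroup M] [Module ℚ M]
    (SMB : DGModStruct SB M) (SMA : DGModStruct SA M) : Prop :=
  (∀ j : ℤ, SMA.gr j = SMB.gr j) ∧ (∀ (a : A) (m : M), SMA.smul a m = SMB.smul (φ a) m) ∧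
    ∀ m : M, SMA.d m = SMB.d m

/-- A (degree `0`) morphism of dg-modules over a fixed CDGA. -/
def IsDGModHom {A : Type} [Ring A] [Algebra ℚ A] {SA : CDGAStruct A}
    {M N : Type} [AddCommGroup M] [Module ℚ M] [AddCommGroup N] [Module ℚ N]
    (SM : DGModStruct SA M) (SN : DGModStruct SA N) (f : M →ₗ[ℚ] N) : Prop :=
  (∀ j : ℤ, ∀ m ∈ SM.gr j, f m ∈ SN.gr j) ∧
    (∀ (a : A) (m : M), f (SM.smul a m) = SN.smul a (f m)) ∧
    ∀ m : M, f (SM.d m) = SN.d (f m)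

/-- A (degree `0`) morphism of `A`-dg-modules with target the CDGA `A` itself. -/
def IsDGHomToAlg {A : Type} [Ring A] [Algebra ℚ A] (SA : CDGAStruct A)
    {M : Type} [AddCommGroup M] [Module ℚ M]
    (SM : DGModStruct SA M) (f : M →ₗ[ℚ] A) : Prop :=
  (∀ j : ℤ, ∀ m ∈ SM.gr j, f m ∈ SA.grZ j) ∧
    (∀ (a : A) (m : M), f (SM.smul a m) = a * f m) ∧
    ∀ m : M, f (SM.d m) = SA.d (f m)

/-- An `A`-dg-module morphism `f : M → A` is balanced when `f(x)·y = x·f(y)`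
for all `x, y ∈ M`; here `x·f(y) = (-1)^{|x||f(y)|} f(y)·x` by the usual Koszul
sign rule, and `|f(y)| = |y|` since `f` has degree `0`. -/
def IsBalanced {A : Type} [Ring A] [Algebra ℚ A] (SA : CDGAStruct A)
    {M : Type} [AddCommGroup M] [Module ℚ M]
    (SM : DGModStruct SA M) (f : M →ₗ[ℚ] A) : Prop :=
  ∀ (i j : ℤ) (x y : M), x ∈ SM.gr i → y ∈ SM.gr j →
    SM.smul (f x) y = ((-1 : ℚ) ^ (i * j)) • SM.smul (f y) x

/-- `SD` realizes the shifted linear dual `s^{-n}#M` of the `A`-dg-module `M`: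
the structure carries a pairing `⟨-,-⟩ : D ⊗ M → ℚ` which vanishes except
between degrees `p` and `n - p`, is perfect in each degree, and satisfies
`⟨d f, x⟩ = -(-1)^{|f|} ⟨f, d x⟩` and `⟨a·f, x⟩ = (-1)^{|a||f|} ⟨f, a·x⟩`
(the standard dual dg-module structure `(a·f)(x) = (-1)^{|a||f|} f(a·x)` with
the dual differential). -/
structure DualRep {A : Type} [Ring A] [Algebra ℚ A] (SA : CDGAStruct A)
    {M : Type} [AddCommGroup M] [Module ℚ M] (SM : DGModStruct SA M) (n : ℤ)
    {D : Type} [AddCommGroup D] [Module ℚ D] (SD : DGModStruct SA D) : Type where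
  pair : D →ₗ[ℚ] M →ₗ[ℚ] ℚ
  pair_deg : ∀ {p q : ℤ} {f : D} {x : M}, f ∈ SD.gr p → x ∈ SM.gr q →
    p + q ≠ n → pair f x = 0
  nondeg : ∀ {p : ℤ} (f : D), f ∈ SD.gr p → (∀ x ∈ SM.gr (n - p), pair f x = 0) → f = 0
  surj : ∀ (p : ℤ) (φ : M →ₗ[ℚ] ℚ), ∃ f ∈ SD.gr p, ∀ x ∈ SM.gr (n - p), pair f x = φ x
  d_pair : ∀ {p : ℤ} (f : D) (x : M), f ∈ SD.gr p →
    pair (SD.d f) x = -(((-1 : ℚ) ^ p) * pair f (SM.d x))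
  smul_pair : ∀ {i : ℕ} {p : ℤ} (a : A) (f : D) (x : M), a ∈ SA.gr i → f ∈ SD.gr p →
    pair (SD.smul a f) x = ((-1 : ℚ) ^ ((i : ℤ) * p)) * pair f (SM.smul a x)

/-- A bundled dg-module over the CDGA `(A, SA)`. -/
structure DGMod {A : Type} [Ring A] [Algebra ℚ A] (SA : CDGAStruct A) : Type 1 where
  carrier : Type
  [acg : AddCommGroup carrier]
  [mod : Module ℚ carrier]
  str : DGModStruct SA carrier

attribute [instance] DGMod.acg DGMod.mod

/-- `SA` is a Poincaré duality CDGA in dimension `n`: it is connected, of finite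
type, and there is an isomorphism of `A`-dg-modules `θ : A ≅ s^{-n}#A`. -/
def IsPDCDGA {A : Type} [Ring A] [Algebra ℚ A] (SA : CDGAStruct A) (n : ℤ) : Prop :=
  SA.Connected ∧ SA.FiniteType ∧
    ∃ SAm : DGModStruct SA A, IsSelfMod SA SAm ∧
      ∃ (DM : DGMod SA) (_ : DualRep SA SAm n DM.str) (θ : A →ₗ[ℚ] DM.carrier),
        IsDGModHom SAm DM.str θ ∧ Function.Bijective θ

section Cohomology

variable {M N : Type} [AddCommGroup M] [Module ℚ M] [AddCommGroup N] [Module ℚ N]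

def IsCocycle (gr : ℤ → Submodule ℚ M) (d : M →ₗ[ℚ] M) (j : ℤ) (x : M) : Prop :=
  x ∈ gr j ∧ d x = 0

def IsCoboundary (gr : ℤ → Submodule ℚ M) (d : M →ₗ[ℚ] M) (j : ℤ) (x : M) : Prop :=
  ∃ y ∈ gr (j - 1), d y = x

/-- `H^j` vanishes: every cocycle of degree `j` is a coboundary. -/
def CohVanishAt (gr : ℤ → Submodule ℚ M) (d : M →ₗ[ℚ] M) (j : ℤ) : Prop :=
  ∀ x, IsCocycle gr d j x → IsCoboundary gr d j x

/-- The chain map `f` induces an isomorphism `H^j(M) → H^j(N)` (surjectivity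
and injectivity on cohomology classes in degree `j`). -/
def CohomIsoAt (grM : ℤ → Submodule ℚ M) (dM : M →ₗ[ℚ] M)
    (grN : ℤ → Submodule ℚ N) (dN : N →ₗ[ℚ] N) (f : M →ₗ[ℚ] N) (j : ℤ) : Prop :=
  (∀ y, IsCocycle grN dN j y →
    ∃ x, IsCocycle grM dM j x ∧ IsCoboundary grN dN j (f x - y)) ∧
  ∀ x, IsCocycle grM dM j x → IsCoboundary grN dN j (f x) → IsCoboundary grM dM j x

def IsQuasiIsoGr (grM : ℤ → Submodule ℚ M) (dM : M →ₗ[ℚ] M)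
    (grN : ℤ → Submodule ℚ N) (dN : N →ₗ[ℚ] N) (f : M →ₗ[ℚ] N) : Prop :=
  ∀ j : ℤ, CohomIsoAt grM dM grN dN f j

/-- The degree-`j` cohomology of a graded cochain complex, as a `ℚ`-module. -/
abbrev cohomologyAt (gr : ℤ → Submodule ℚ M) (d : M →ₗ[ℚ] M) (j : ℤ) : Type :=
  ↥(gr j ⊓ LinearMap.ker d) ⧸
    Submodule.comap (gr j ⊓ LinearMap.ker d).subtype (LinearMap.range d)

end Cohomology

/-- A quasi-isomorphism of CDGAs (on underlying linear maps). -/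
def IsQuasiIsoCDGA {A B : Type} [Ring A] [Algebra ℚ A] [Ring B] [Algebra ℚ B]
    (SA : CDGAStruct A) (SB : CDGAStruct B) (f : A →ₗ[ℚ] B) : Prop :=
  IsQuasiIsoGr SA.grZ SA.d SB.grZ SB.d f

/-- `H(A)` is a Poincaré duality algebra in dimension `n`: `H⁰ = ℚ`,
`H^{>n} = 0`, `dim H^n = 1` and the multiplication pairing
`H^k ⊗ H^{n-k} → H^n ≅ ℚ` is non-degenerate (expressed elementwise via a
linear functional `ε` representing evaluation against the fundamental class). -/
def CohomologyPD {A : Type} [Ring A] [Algebra ℚ A] (SA : CDGAStruct A) (n : ℕ) : Prop :=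
  (∀ a ∈ SA.gr 0, SA.d a = 0 → ∃ q : ℚ, a = q • (1 : A)) ∧
  (∀ j : ℤ, (n : ℤ) < j → CohVanishAt SA.grZ SA.d j) ∧
  ∃ ε : A →ₗ[ℚ] ℚ,
    (∀ i : ℕ, i ≠ n → ∀ a ∈ SA.gr i, ε a = 0) ∧
    (∀ a : A, ε (SA.d a) = 0) ∧
    (∃ a ∈ SA.gr n, SA.d a = 0 ∧ ε a = 1) ∧
    (∀ a ∈ SA.gr n, SA.d a = 0 → ε a = 0 → IsCoboundary SA.grZ SA.d (n : ℤ) a) ∧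
    ∀ i : ℕ, i ≤ n → ∀ a ∈ SA.gr i, SA.d a = 0 →
      ¬ IsCoboundary SA.grZ SA.d (i : ℤ) a →
        ∃ b ∈ SA.gr (n - i), SA.d b = 0 ∧ ε (a * b) ≠ 0

/-- `H(A)` is `1`-connected: `H⁰(A) = ℚ` and `H¹(A) = 0`. -/
def CohOneConnected {A : Type} [Ring A] [Algebra ℚ A] (SA : CDGAStruct A) : Prop :=
  (∀ a ∈ SA.gr 0, SA.d a = 0 → ∃ q : ℚ, a = q • (1 : A)) ∧
  ∀ a ∈ SA.gr 1, SA.d a = 0 → ∃ b ∈ SA.gr 0, SA.d b = a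

section Cone

variable {A : Type} [Ring A] [Algebra ℚ A] {M : Type} [AddCommGroup M] [Module ℚ M]

/-- The grading of the mapping cone `C(f) = A ⊕ sM` of a dg-module morphism
`f : M → A`:  `C(f)^p = A^p ⊕ (sM)^p = A^p ⊕ M^{p+1}`. -/
def coneGr (SA : CDGAStruct A) (SM : DGModStruct SA M) : ℤ → Submodule ℚ (A × M) :=
  fun p => (SA.grZ p).prod (SM.gr (p + 1))

/-- The differential of the mapping cone `C(f) = A ⊕_f sM`:
`δ(a, sm) = (d a + f m, -s (d m))`. -/
def coneD (SA : CDGAStruct A) (SM : DGModStruct SA M) (f : M →ₗ[ℚ] A) :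
    A × M →ₗ[ℚ] A × M :=
  (SA.d ∘ₗ LinearMap.fst ℚ A M + f ∘ₗ LinearMap.snd ℚ A M).prod
    (-(SM.d ∘ₗ LinearMap.snd ℚ A M))

/-- The semi-trivial product on the mapping cone `A ⊕ sM`: it is the unique
graded-commutative product extending the product of `A` and the `A`-module
structure of `sM` (with the Koszul sign `a·(sm) = (-1)^{|a|} s(a·m)`), and with
`(sm)·(sm') = 0`. -/
def SemiTrivialMul (SA : CDGAStruct A) (SM : DGModStruct SA M)
    (μ : A × M →ₗ[ℚ] A × M →ₗ[ℚ] A × M) : Prop :=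
  (∀ a a' : A, μ (a, 0) (a', 0) = (a * a', 0)) ∧
  (∀ (i : ℕ) (a : A) (m : M), a ∈ SA.gr i →
    μ (a, 0) (0, m) = (0, ((-1 : ℚ) ^ i) • SM.smul a m)) ∧
  (∀ (i : ℕ) (j : ℤ) (a : A) (m : M), a ∈ SA.gr i → m ∈ SM.gr j →
    μ (0, m) (a, 0) = (0, ((-1 : ℚ) ^ (j * (i : ℤ))) • SM.smul a m)) ∧
  ∀ m m' : M, μ (0, m) (0, m') = 0

end Cone

/-- The data `(gr, 1, μ, d)` on `C` is a (`ℤ`-graded) CDGA: internal grading,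
unital associative graded-commutative product, degree `+1` differential
squaring to zero and satisfying the Leibniz rule. -/
def IsGCDGA {C : Type} [AddCommGroup C] [Module ℚ C]
    (gr : ℤ → Submodule ℚ C) (one : C) (μ : C →ₗ[ℚ] C →ₗ[ℚ] C) (d : C →ₗ[ℚ] C) : Prop :=
  DirectSum.IsInternal gr ∧
  one ∈ gr 0 ∧
  (∀ x, μ one x = x) ∧ (∀ x, μ x one = x) ∧
  (∀ x y z : C, μ (μ x y) z = μ x (μ y z)) ∧
  (∀ (i j : ℤ) (x y : C), x ∈ gr i → y ∈ gr j → μ x y ∈ gr (i + j)) ∧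
  (∀ (i j : ℤ) (x y : C), x ∈ gr i → y ∈ gr j → μ x y = ((-1 : ℚ) ^ (i * j)) • μ y x) ∧
  (∀ j : ℤ, ∀ x ∈ gr j, d x ∈ gr (j + 1)) ∧
  (∀ x, d (d x) = 0) ∧
  ∀ (i : ℤ) (x y : C), x ∈ gr i → d (μ x y) = μ (d x) y + ((-1 : ℚ) ^ i) • μ x (d y)

/-- A morphism of (`ℤ`-graded) differential graded algebras presented by
`(grading, unit, product, differential)` data. -/
def IsGradedDGAHom {C D : Type} [AddCommGroup C] [Module ℚ C] [AddCommGroup D] [Module ℚ D]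
    (grC : ℤ → Submodule ℚ C) (oneC : C) (μC : C →ₗ[ℚ] C →ₗ[ℚ] C) (dC : C →ₗ[ℚ] C)
    (grD : ℤ → Submodule ℚ D) (oneD : D) (μD : D →ₗ[ℚ] D →ₗ[ℚ] D) (dD : D →ₗ[ℚ] D)
    (g : C →ₗ[ℚ] D) : Prop :=
  g oneC = oneD ∧ (∀ x y : C, g (μC x y) = μD (g x) (g y)) ∧
    (∀ j : ℤ, ∀ x ∈ grC j, g x ∈ grD j) ∧ ∀ x, g (dC x) = dD (g x)

/-- An orientation in degree `n` of a CDGA: a chain map `ε : A → s^{-n}ℚ`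
(i.e., `ε` is supported in degree `n` and kills boundaries) which is surjective
in cohomology. -/
def IsOrientation {A : Type} [Ring A] [Algebra ℚ A] (SA : CDGAStruct A) (n : ℕ)
    (ε : A →ₗ[ℚ] ℚ) : Prop :=
  (∀ i : ℕ, i ≠ n → ∀ a ∈ SA.gr i, ε a = 0) ∧ (∀ a : A, ε (SA.d a) = 0) ∧
    ∃ a ∈ SA.gr n, SA.d a = 0 ∧ ε a ≠ 0

/-- The orphan ideal `O(A, ε) = {a ∈ A | ∀ b, ε(a·b) = 0}` of an oriented CDGA. -/
def orphans {A : Type} [Ring A] [Algebra ℚ A] (_SA : CDGAStruct A) (ε : A →ₗ[ℚ] ℚ) :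
    Submodule ℚ A where
  carrier := { a : A | ∀ b : A, ε (a * b) = 0 }
  add_mem' := by
    intro a a' ha ha'
    intro b
    rw [add_mul, map_add, ha b, ha' b, add_zero]
  zero_mem' := by
    intro b
    rw [zero_mul, map_zero]
  smul_mem' := by
    intro c a ha
    intro b
    rw [smul_mul_assoc, map_smul, ha b, smul_zero]

/-- The orphan ideal is acyclic: it has vanishing cohomology in all degrees. -/
def OrphansAcyclic {A : Type} [Ring A] [Algebra ℚ A] (SA : CDGAStruct A)
    (ε : A →ₗ[ℚ] ℚ) : Prop :=
  ∀ (j : ℕ) (x : A), x ∈ orphans SA ε → x ∈ SA.gr j → SA.d x = 0 →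
    ∃ y ∈ orphans SA ε, y ∈ SA.gr (j - 1) ∧ SA.d y = x

/-- A (relative) Sullivan extension `(A, d) ↪ (Â = A ⊗ ΛV, d̂)`: an injective
CDGA morphism `inc : A → Â` together with a graded subspace `V ⊆ Â` of
generators such that `Â` is the free graded-commutative `A`-algebra on `V`
(expressed by the universal property), and `V` admits an exhaustive increasing
filtration `F 0 ⊆ F 1 ⊆ ⋯` with `d̂(F (k+1)) ⊆ A ⊗ ΛF k` and `d̂(F 0) ⊆ A`. -/
structure SullivanExtension {A Ahat : Type} [Ring A] [Algebra ℚ A]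
    [Ring Ahat] [Algebra ℚ Ahat]
    (SA : CDGAStruct A) (SH : CDGAStruct Ahat) : Type 1 where
  inc : A →ₗ[ℚ] Ahat
  hom : IsCDGAHom SA SH inc
  inj : Function.Injective inc
  V : ℕ → Submodule ℚ Ahat
  V_deg : ∀ i : ℕ, V i ≤ SH.gr i
  free : ∀ (B : Type) [Ring B] [Algebra ℚ B] (SB : CDGAStruct B) (g : A →ₗ[ℚ] B),
    g 1 = 1 → (∀ a a' : A, g (a * a') = g a * g a') →
    (∀ i : ℕ, ∀ a ∈ SA.gr i, g a ∈ SB.gr i) →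
    ∀ h : Ahat →ₗ[ℚ] B, (∀ i : ℕ, ∀ v ∈ V i, h v ∈ SB.gr i) →
    ∃! G : Ahat →ₗ[ℚ] B, G 1 = 1 ∧ (∀ x y : Ahat, G (x * y) = G x * G y) ∧
      (∀ i : ℕ, ∀ x ∈ SH.gr i, G x ∈ SB.gr i) ∧
      (∀ a : A, G (inc a) = g a) ∧ ∀ i : ℕ, ∀ v ∈ V i, G v = h v
  filt : ∃ F : ℕ → Submodule ℚ Ahat,
    (∀ k : ℕ, F k ≤ F (k + 1)) ∧ (∀ k : ℕ, F k ≤ ⨆ i, V i) ∧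
    ((⨆ i, V i) ≤ ⨆ k, F k) ∧
    (∀ v ∈ F 0, SH.d v ∈ Algebra.adjoin ℚ (Set.range inc)) ∧
    ∀ k : ℕ, ∀ v ∈ F (k + 1),
      SH.d v ∈ Algebra.adjoin ℚ (Set.range inc ∪ (F k : Set Ahat))

/-- A bundled CDGA over `ℚ`. -/
structure CDGA : Type 1 where
  carrier : Type
  [ring : Ring carrier]
  [alg : Algebra ℚ carrier]
  str : CDGAStruct carrier

attribute [instance] CDGA.ring CDGA.alg

/-- A bundled morphism of CDGAs. -/
structure CDGAMor : Type 1 where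
  src : CDGA
  tgt : CDGA
  map : src.carrier →ₗ[ℚ] tgt.carrier
  isHom : IsCDGAHom src.str tgt.str map

/-- One step of weak equivalence between CDGA morphisms: a commutative square
whose horizontal maps are quasi-isomorphisms of CDGAs. -/
def MorWeakEqStep (m m' : CDGAMor) : Prop :=
  ∃ (α : m.src.carrier →ₗ[ℚ] m'.src.carrier) (β : m.tgt.carrier →ₗ[ℚ] m'.tgt.carrier),
    IsCDGAHom m.src.str m'.src.str α ∧ IsQuasiIsoCDGA m.src.str m'.src.str α ∧
    IsCDGAHom m.tgt.str m'.tgt.str β ∧ IsQuasiIsoCDGA m.tgt.str m'.tgt.str β ∧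
    β ∘ₗ m.map = m'.map ∘ₗ α

/-- Two CDGA morphisms are weakly equivalent if they are connected by a finite
zigzag of commutative squares whose horizontal maps are quasi-isomorphisms. -/
def MorWeakEq : CDGAMor → CDGAMor → Prop := Relation.EqvGen MorWeakEqStep

/-- Two CDGAs are weakly equivalent if they are connected by a finite zigzag of
quasi-isomorphisms of CDGAs. -/
def CDGAWeakEq : CDGA → CDGA → Prop :=
  Relation.EqvGen fun X Y =>
    ∃ f : X.carrier →ₗ[ℚ] Y.carrier, IsCDGAHom X.str Y.str f ∧ IsQuasiIsoCDGA X.str Y.str f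

end


/-!
A Poincaré duality structure in dimension `n` amounts to a functional `ε` (evaluation on the
fundamental class) that kills coboundaries and for which `(a, b) ↦ ε (a * b)` is a perfect pairing
between degrees `p` and `n - p`; the duality isomorphism is then `θ a = ε (a * -)`.

Every element of `P` is uniquely `a + b z` with `a, b ∈ Q`, and `ε_P (a + b z) := ε_Q b` has
degree `n`. As `(a + b z) (a' + b' z) = a a' + (a b' + b a' + b b' e) z`, pairing against `Q` sees
only `b`, and pairing against `Q z` sees `a` once `b` is known. So nondegeneracy and the
existence of representing elements for `ε_P` reduce, triangularly, to those for `ε_Q`.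
-/

theorem DirectSum.IsInternal.mem_of_injective_of_map_mem {R ι M N : Type*} [Ring R]
    [AddCommGroup M] [Module R M] [AddCommGroup N] [Module R N] [DecidableEq ι]
    {grM : ι → Submodule R M} {grN : ι → Submodule R N}
    (hM : DirectSum.IsInternal grM) (hN : DirectSum.IsInternal grN)
    {f : M →ₗ[R] N} (hf : ∀ i, ∀ m ∈ grM i, f m ∈ grN i) (hinj : Function.Injective f)
    {p : ι} {x : M} (hx : f x ∈ grN p) : x ∈ grM p := by
  classical
  let _ := hM.chooseDecomposition
  let _ := hN.chooseDecomposition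
  have hcomp : ∀ (y : M) (j : ι),
      (DirectSum.decompose grN (f y) j : N) = f (DirectSum.decompose grM y j) := by
    intro y j
    induction y using DirectSum.Decomposition.inductionOn grM with
    | zero => simp
    | @homogeneous i m =>
      rcases eq_or_ne i j with rfl | hij
      · rw [DirectSum.decompose_of_mem_same _ m.2,
          DirectSum.decompose_of_mem_same _ (hf i m m.2)]
      · rw [DirectSum.decompose_of_mem_ne _ m.2 hij,
          DirectSum.decompose_of_mem_ne _ (hf i m m.2) hij, map_zero]
    | add y y' hy hy' => simp [hy, hy']
  rw [← DirectSum.sum_support_decompose grM x]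
  refine Submodule.sum_mem _ fun j _ => ?_
  rcases eq_or_ne j p with rfl | hjp
  · exact (DirectSum.decompose grM x j).2
  · have : f (DirectSum.decompose grM x j) = f 0 := by
      rw [← hcomp, DirectSum.decompose_of_mem_ne _ hx hjp.symm, map_zero]
    rw [hinj this]
    exact zero_mem _

namespace CDGAStruct

variable {A : Type} [Ring A] [Algebra ℚ A] (SA : CDGAStruct A)

theorem grZ_of_neg {j : ℤ} (hj : j < 0) : SA.grZ j = ⊥ := by
  simp [grZ, not_le.mpr hj]

@[simp]
theorem grZ_natCast (i : ℕ) : SA.grZ i = SA.gr i := by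
  simp [grZ]

theorem eq_zero_of_mem_grZ_of_neg {j : ℤ} {a : A} (ha : a ∈ SA.grZ j) (hj : j < 0) : a = 0 := by
  rwa [SA.grZ_of_neg hj, Submodule.mem_bot] at ha

theorem isInternal_grZ : DirectSum.IsInternal SA.grZ := by
  obtain ⟨hind, hsup⟩ :=
    (DirectSum.isInternal_submodule_iff_iSupIndep_and_iSup_eq_top _).mp SA.internal
  refine (DirectSum.isInternal_submodule_iff_iSupIndep_and_iSup_eq_top _).mpr ⟨?_, ?_⟩
  · rw [← iSupIndep_ne_bot]
    have hpos (j : {j // SA.grZ j ≠ ⊥}) : 0 ≤ (j : ℤ) :=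
      not_lt.mp fun hj => j.2 (SA.grZ_of_neg hj)
    have hinj : Function.Injective fun j : {j // SA.grZ j ≠ ⊥} => (j : ℤ).toNat :=
      fun i j hij => Subtype.ext (by have := hpos i; have := hpos j; simp only at hij; omega)
    convert hind.comp hinj using 1
    funext j
    exact if_pos (hpos j)
  · rw [eq_top_iff, ← hsup]
    exact iSup_le fun i => le_iSup_of_le (i : ℤ) (SA.grZ_natCast i).ge

theorem mul_mem_grZ {i j : ℤ} {a b : A} (ha : a ∈ SA.grZ i) (hb : b ∈ SA.grZ j) :
    a * b ∈ SA.grZ (i + j) := by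
  rcases lt_or_ge i 0 with hi | hi
  · simp [SA.eq_zero_of_mem_grZ_of_neg ha hi]
  rcases lt_or_ge j 0 with hj | hj
  · simp [SA.eq_zero_of_mem_grZ_of_neg hb hj]
  lift i to ℕ using hi
  lift j to ℕ using hj
  rw [grZ_natCast] at ha hb
  rw [← Nat.cast_add, grZ_natCast]
  exact SA.mul_mem ha hb

theorem d_mem_grZ {j : ℤ} {a : A} (ha : a ∈ SA.grZ j) : SA.d a ∈ SA.grZ (j + 1) := by
  rcases lt_or_ge j 0 with hj | hj
  · simp [SA.eq_zero_of_mem_grZ_of_neg ha hj]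
  lift j to ℕ using hj
  rw [grZ_natCast] at ha
  rw [← Nat.cast_one, ← Nat.cast_add, grZ_natCast]
  exact SA.d_mem ha

theorem d_one : SA.d 1 = 0 := by
  simpa using SA.leibniz (1 : A) 1 SA.one_mem

theorem finiteDimensional_grZ (hA : SA.FiniteType) (j : ℤ) :
    FiniteDimensional ℚ (SA.grZ j) := by
  rcases lt_or_ge j 0 with hj | hj
  · rw [SA.grZ_of_neg hj]
    infer_instance
  · lift j to ℕ using hj
    rw [grZ_natCast]
    exact hA j

theorem linearMap_ext {M : Type} [AddCommGroup M] [Module ℚ M] {f g : A →ₗ[ℚ] M}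
    (h : ∀ i, ∀ a ∈ SA.gr i, f a = g a) : f = g := by
  have hle : ⨆ i, SA.gr i ≤ LinearMap.eqLocus f g := iSup_le fun i a ha => h i a ha
  rw [SA.internal.submodule_iSup_eq_top, top_le_iff] at hle
  exact LinearMap.ext fun a => (hle ▸ Submodule.mem_top : a ∈ LinearMap.eqLocus f g)

theorem d_mul_of_d_eq_zero {b : A} (hb : SA.d b = 0) (a : A) : SA.d (a * b) = SA.d a * b := by
  refine LinearMap.congr_fun (SA.linearMap_ext (f := SA.d ∘ₗ LinearMap.mulRight ℚ b)
    (g := LinearMap.mulRight ℚ b ∘ₗ SA.d) fun i a ha => ?_) a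
  simp [SA.leibniz a b ha, hb]

theorem commute_of_mem_gr_even {k : ℕ} {z : A} (hz : z ∈ SA.gr (2 * k)) (a : A) :
    Commute z a := by
  refine LinearMap.congr_fun (SA.linearMap_ext (f := LinearMap.mulLeft ℚ z)
    (g := LinearMap.mulRight ℚ z) fun i a ha => ?_) a
  simp [SA.gcomm hz ha, pow_mul]

def selfDGMod : DGModStruct SA A where
  gr := SA.grZ
  internal := SA.isInternal_grZ
  smul := LinearMap.mul ℚ A
  one_smul := one_mul
  mul_smul := mul_assoc
  smul_mem ha hm := SA.mul_mem_grZ ((SA.grZ_natCast _).ge ha) hm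
  d := SA.d
  d_mem := SA.d_mem_grZ
  d_sq := SA.d_sq
  leibniz := SA.leibniz

theorem isSelfMod_selfDGMod : IsSelfMod SA SA.selfDGMod :=
  ⟨fun _ => rfl, fun _ _ => rfl, fun _ => rfl⟩

end CDGAStruct

section PerfectOrientation

variable {A : Type} [Ring A] [Algebra ℚ A]

/-- `ε` plays the role of evaluation on a fundamental class: `a ↦ ε (a * -)` is then an
isomorphism `A ≅ s^{-n}#A`. -/
structure IsPerfectOrientation (SA : CDGAStruct A) (n : ℤ) (ε : A →ₗ[ℚ] ℚ) : Prop where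
  eq_zero_of_mem_grZ : ∀ {m : ℤ} {a : A}, a ∈ SA.grZ m → m ≠ n → ε a = 0
  map_d : ∀ a : A, ε (SA.d a) = 0
  eq_zero_of_pairing : ∀ {p q : ℤ} {a : A}, p + q = n → a ∈ SA.grZ p →
    (∀ b ∈ SA.grZ q, ε (a * b) = 0) → a = 0
  exists_pairing_eq : ∀ {p q : ℤ}, p + q = n → ∀ φ : A →ₗ[ℚ] ℚ,
    ∃ a ∈ SA.grZ p, ∀ b ∈ SA.grZ q, ε (a * b) = φ b

variable {SA : CDGAStruct A} {n : ℤ} {ε : A →ₗ[ℚ] ℚ}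

def IsPerfectOrientation.dualRep (hε : IsPerfectOrientation SA n ε) :
    DualRep SA SA.selfDGMod n SA.selfDGMod where
  pair := (LinearMap.mul ℚ A).compr₂ ε
  pair_deg hf hx hpq := hε.eq_zero_of_mem_grZ (SA.mul_mem_grZ hf hx) hpq
  nondeg _ := hε.eq_zero_of_pairing (add_sub_cancel _ n)
  surj p := hε.exists_pairing_eq (add_sub_cancel p n)
  d_pair := by
    intro p f x hf
    rcases lt_or_ge p 0 with hp | hp
    · simp [SA.eq_zero_of_mem_grZ_of_neg hf hp, CDGAStruct.selfDGMod]
    lift p to ℕ using hp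
    have h := hε.map_d (f * x)
    rw [SA.leibniz f x ((SA.grZ_natCast p).le hf), map_add, map_smul, smul_eq_mul] at h
    simp only [LinearMap.compr₂_apply, LinearMap.mul_apply', CDGAStruct.selfDGMod, zpow_natCast]
    linarith
  smul_pair := by
    intro i p a f x ha hf
    rcases lt_or_ge p 0 with hp | hp
    · simp [SA.eq_zero_of_mem_grZ_of_neg hf hp, CDGAStruct.selfDGMod]
    lift p to ℕ using hp
    simp only [LinearMap.compr₂_apply, LinearMap.mul_apply', CDGAStruct.selfDGMod]
    rw [SA.gcomm ha ((SA.grZ_natCast p).le hf), smul_mul_assoc, map_smul, smul_eq_mul,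
      mul_assoc, ← Nat.cast_mul, zpow_natCast]

theorem isPDCDGA_of_isPerfectOrientation (hc : SA.Connected) (hft : SA.FiniteType)
    (hε : IsPerfectOrientation SA n ε) : IsPDCDGA SA n :=
  ⟨hc, hft, SA.selfDGMod, SA.isSelfMod_selfDGMod, ⟨A, SA.selfDGMod⟩, hε.dualRep, LinearMap.id,
    ⟨fun _ _ hm => hm, fun _ _ => rfl, fun _ => rfl⟩, Function.bijective_id⟩

theorem IsPDCDGA.exists_isPerfectOrientation (h : IsPDCDGA SA n) :
    ∃ ε, IsPerfectOrientation SA n ε := by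
  obtain ⟨-, -, SAm, ⟨hgr, hsmul, hd⟩, DM, R, θ, ⟨hθgr, hθsmul, hθd⟩, hθinj, hθsurj⟩ := h
  have hθ1 : θ 1 ∈ DM.str.gr 0 := hθgr 0 1 (hgr 0 ▸ (SA.grZ_natCast 0).ge SA.one_mem)
  -- `θ a = a • θ 1`, and the Koszul sign of moving `a` past `θ 1` is trivial as `|θ 1| = 0`
  have hpair (a b : A) : R.pair (θ a) b = R.pair (θ 1) (a * b) := by
    refine LinearMap.congr_fun (LinearMap.congr_fun (SA.linearMap_ext
      (f := R.pair ∘ₗ θ) (g := (LinearMap.mul ℚ A).compr₂ (R.pair (θ 1))) fun i a ha => ?_) a) b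
    ext b
    have hθa : θ a = DM.str.smul a (θ 1) := by rw [← hθsmul, hsmul, mul_one]
    simp [hθa, R.smul_pair a (θ 1) b ha hθ1, hsmul]
  have hθmem {p : ℤ} {a : A} (ha : a ∈ SA.grZ p) : θ a ∈ DM.str.gr p := hθgr p a (hgr p ▸ ha)
  refine ⟨R.pair (θ 1), ⟨fun ha hm => R.pair_deg hθ1 (hgr _ ▸ ha) (by omega), fun a => ?_,
    fun {p q a} hpq ha hvan => ?_, fun {p q} hpq φ => ?_⟩⟩
  · have hd1 : DM.str.d (θ 1) = 0 := by rw [← hθd, hd, SA.d_one, map_zero]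
    simpa [hd1, hd] using R.d_pair (θ 1) a hθ1
  · obtain rfl : q = n - p := by omega
    refine hθinj ((R.nondeg (θ a) (hθmem ha) fun b hb => ?_).trans (map_zero θ).symm)
    rw [hpair]
    exact hvan b (hgr _ ▸ hb)
  · obtain rfl : q = n - p := by omega
    obtain ⟨f, hf, hfφ⟩ := R.surj p φ
    obtain ⟨a, rfl⟩ := hθsurj f
    have ha : a ∈ SA.grZ p :=
      SA.isInternal_grZ.mem_of_injective_of_map_mem DM.str.internal
        (fun j _ hb => hθmem hb) hθinj hf
    exact ⟨a, ha, fun b hb => by rw [← hpair, hfφ b (hgr _ ▸ hb)]⟩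

end PerfectOrientation

section QuadraticExtension

variable {Q P : Type} [Ring Q] [Algebra ℚ Q] [Ring P] [Algebra ℚ P]
  {SQ : CDGAStruct Q} {SP : CDGAStruct P} {ι : Q →ₗ[ℚ] P} {z : P} {k : ℕ}
  {E : (Q × Q) ≃ₗ[ℚ] P}

theorem IsCDGAHom.map_mem_grZ (hι : IsCDGAHom SQ SP ι) {j : ℤ} {a : Q}
    (ha : a ∈ SQ.grZ j) : ι a ∈ SP.grZ j := by
  rcases lt_or_ge j 0 with hj | hj
  · simp [SQ.eq_zero_of_mem_grZ_of_neg ha hj]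
  lift j to ℕ using hj
  rw [CDGAStruct.grZ_natCast] at ha ⊢
  exact hι.2.2.1 j a ha

theorem extension_mem_grZ (hι : IsCDGAHom SQ SP ι) (hz : z ∈ SP.gr (2 * k))
    (hE : ∀ qq, E qq = ι qq.1 + ι qq.2 * z) {j : ℤ} {a b : Q}
    (ha : a ∈ SQ.grZ j) (hb : b ∈ SQ.grZ (j - 2 * k)) : E (a, b) ∈ SP.grZ j := by
  rw [hE]
  refine add_mem (hι.map_mem_grZ ha) ?_
  simpa using SP.mul_mem_grZ (hι.map_mem_grZ hb) ((SP.grZ_natCast _).ge hz)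

theorem extension_mul (hι : IsCDGAHom SQ SP ι) (hz : z ∈ SP.gr (2 * k)) {e : Q}
    (hzsq : z * z = ι e * z) (hE : ∀ qq, E qq = ι qq.1 + ι qq.2 * z) (a b a' b' : Q) :
    E (a, b) * E (a', b') = E (a * a', a * b' + b * a' + b * b' * e) := by
  have hmul := hι.2.1
  have hzc := SP.commute_of_mem_gr_even hz
  have hzz : ι b * z * (ι b' * z) = ι b * ι b' * ι e * z := by
    rw [← mul_assoc, (hzc _).right_comm, mul_assoc _ z z, hzsq, ← mul_assoc]
  simp only [hE, hmul, map_add, add_mul, mul_add]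
  rw [← mul_assoc (ι a), (hzc (ι a')).right_comm, hzz]
  abel

theorem extension_d (hι : IsCDGAHom SQ SP ι) (hdz : SP.d z = 0)
    (hE : ∀ qq, E qq = ι qq.1 + ι qq.2 * z) (a b : Q) :
    SP.d (E (a, b)) = E (SQ.d a, SQ.d b) := by
  simp only [hE, map_add, SP.d_mul_of_d_eq_zero hdz, hι.2.2.2]

theorem connected_of_extension (hι : IsCDGAHom SQ SP ι) (hk : 1 ≤ k)
    (hE : ∀ qq, E qq = ι qq.1 + ι qq.2 * z)
    (hgr : ∀ ⦃j : ℤ⦄ ⦃a b : Q⦄, E (a, b) ∈ SP.grZ j → a ∈ SQ.grZ j ∧ b ∈ SQ.grZ (j - 2 * k))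
    (hQ : SQ.Connected) : SP.Connected := by
  have hE1 (c : ℚ) : E (c • 1, 0) = c • 1 := by simp [hE, hι.1]
  intro x hx
  obtain ⟨⟨a, b⟩, rfl⟩ := E.surjective x
  obtain ⟨ha, hb⟩ := hgr ((SP.grZ_natCast 0).ge hx)
  obtain rfl : b = 0 := SQ.eq_zero_of_mem_grZ_of_neg hb (by omega)
  obtain ⟨c, rfl, huniq⟩ := hQ a ((SQ.grZ_natCast 0).le ha)
  refine ⟨c, hE1 c, fun c' hc' => huniq c' ?_⟩
  exact congrArg Prod.fst (E.injective (hc'.trans (hE1 c').symm))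

theorem finiteType_of_extension
    (hgr : ∀ ⦃j : ℤ⦄ ⦃a b : Q⦄, E (a, b) ∈ SP.grZ j → a ∈ SQ.grZ j ∧ b ∈ SQ.grZ (j - 2 * k))
    (hQ : SQ.FiniteType) : SP.FiniteType := by
  intro i
  have := SQ.finiteDimensional_grZ hQ i
  have := SQ.finiteDimensional_grZ hQ (i - 2 * k)
  have hle : SP.gr i ≤ (SQ.grZ i).map (E ∘ₗ LinearMap.inl ℚ Q Q) ⊔
      (SQ.grZ (i - 2 * k)).map (E ∘ₗ LinearMap.inr ℚ Q Q) := by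
    intro x hx
    obtain ⟨⟨a, b⟩, rfl⟩ := E.surjective x
    obtain ⟨ha, hb⟩ := hgr ((SP.grZ_natCast i).ge hx)
    rw [show (a, b) = (a, 0) + (0, b) by simp, map_add]
    exact Submodule.add_mem_sup ⟨a, ha, rfl⟩ ⟨b, hb, rfl⟩
  exact Submodule.finiteDimensional_of_le hle

theorem isPerfectOrientation_of_extension (hι : IsCDGAHom SQ SP ι) (hz : z ∈ SP.gr (2 * k))
    (hdz : SP.d z = 0) {e : Q} (hzsq : z * z = ι e * z) (hE : ∀ qq, E qq = ι qq.1 + ι qq.2 * z)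
    (hgr : ∀ ⦃j : ℤ⦄ ⦃a b : Q⦄, E (a, b) ∈ SP.grZ j → a ∈ SQ.grZ j ∧ b ∈ SQ.grZ (j - 2 * k))
    {n : ℤ} {ε : Q →ₗ[ℚ] ℚ} (hε : IsPerfectOrientation SQ (n - 2 * k) ε) :
    IsPerfectOrientation SP n (ε ∘ₗ LinearMap.snd ℚ Q Q ∘ₗ E.symm.toLinearMap) := by
  set εP := ε ∘ₗ LinearMap.snd ℚ Q Q ∘ₗ E.symm.toLinearMap
  have hεE (a b : Q) : εP (E (a, b)) = ε b := by
    simp [εP]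
  have hpair (a b c d : Q) : εP (E (a, b) * E (c, d)) = ε (a * d + b * c + b * d * e) := by
    rw [extension_mul hι hz hzsq hE, hεE]
  have hmem {j : ℤ} {a b : Q} (ha : a ∈ SQ.grZ j) (hb : b ∈ SQ.grZ (j - 2 * k)) :
      E (a, b) ∈ SP.grZ j :=
    extension_mem_grZ hι hz hE ha hb
  refine ⟨fun {m x} hx hm => ?_, fun x => ?_, fun {p q x} hpq hx hvan => ?_,
    fun {p q} hpq φ => ?_⟩
  · obtain ⟨⟨a, b⟩, rfl⟩ := E.surjective x
    rw [hεE]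
    exact hε.eq_zero_of_mem_grZ (hgr hx).2 (by omega)
  · obtain ⟨⟨a, b⟩, rfl⟩ := E.surjective x
    rw [extension_d hι hdz hE, hεE]
    exact hε.map_d b
  · obtain ⟨⟨a, b⟩, rfl⟩ := E.surjective x
    obtain ⟨ha, hb⟩ := hgr hx
    -- pairing with `ι Q` detects `b`; once `b = 0`, pairing with `ι Q * z` detects `a`
    obtain rfl : b = 0 := hε.eq_zero_of_pairing (q := q) (by omega) hb fun y hy => by
      simpa [hpair] using hvan _ (hmem hy (zero_mem _))
    obtain rfl : a = 0 := hε.eq_zero_of_pairing (q := q - 2 * k) (by omega) ha fun y hy => by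
      simpa [hpair] using hvan _ (hmem (zero_mem _) hy)
    simp
  · -- `b` represents `φ` on `ι Q`; then `a` represents `φ` on `ι Q * z`, up to the `b d e` term
    obtain ⟨b, hb, hbφ⟩ := hε.exists_pairing_eq (p := p - 2 * k) (q := q) (by omega)
      (φ ∘ₗ E.toLinearMap ∘ₗ LinearMap.inl ℚ Q Q)
    obtain ⟨a, ha, haφ⟩ := hε.exists_pairing_eq (p := p) (q := q - 2 * k) (by omega)
      (φ ∘ₗ E.toLinearMap ∘ₗ LinearMap.inr ℚ Q Q -
        ε ∘ₗ LinearMap.mulRight ℚ e ∘ₗ LinearMap.mulLeft ℚ b)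
    refine ⟨E (a, b), hmem ha hb, fun x hx => ?_⟩
    obtain ⟨⟨c, d⟩, rfl⟩ := E.surjective x
    obtain ⟨hc, hd⟩ := hgr hx
    have h1 := haφ d hd
    have h2 := hbφ c hc
    simp only [LinearMap.sub_apply, LinearMap.comp_apply, LinearMap.mulLeft_apply,
      LinearMap.mulRight_apply, LinearMap.inl_apply, LinearMap.inr_apply,
      LinearEquiv.coe_coe] at h1 h2
    rw [hpair, map_add, map_add, h1, h2, show (c, d) = (c, 0) + (0, d) by simp, map_add, map_add]
    ring

theorem extension_coords_mem_grZ (hE : ∀ qq, E qq = ι qq.1 + ι qq.2 * z)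
    (hgrch : ∀ i : ℕ, ∀ p ∈ SP.gr i, ∃ q₁ q₂ : Q,
      p = ι q₁ + ι q₂ * z ∧ q₁ ∈ SQ.gr i ∧ ((2 * k ≤ i ∧ q₂ ∈ SQ.gr (i - 2 * k)) ∨ q₂ = 0))
    ⦃j : ℤ⦄ ⦃a b : Q⦄ (hab : E (a, b) ∈ SP.grZ j) : a ∈ SQ.grZ j ∧ b ∈ SQ.grZ (j - 2 * k) := by
  rcases lt_or_ge j 0 with hj | hj
  · have h0 : (a, b) = 0 := E.map_eq_zero_iff.mp (SP.eq_zero_of_mem_grZ_of_neg hab hj)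
    simp only [Prod.mk_eq_zero] at h0
    simp [h0]
  lift j to ℕ using hj
  obtain ⟨q₁, q₂, hq, hq₁, hq₂⟩ := hgrch j _ ((SP.grZ_natCast j).le hab)
  obtain ⟨rfl, rfl⟩ := Prod.mk.inj (E.injective (hq.trans (hE (q₁, q₂)).symm))
  refine ⟨(SQ.grZ_natCast j).ge hq₁, ?_⟩
  rcases hq₂ with ⟨hkj, hq₂⟩ | rfl
  · rw [show (j : ℤ) - 2 * k = ((j - 2 * k : ℕ) : ℤ) by omega, SQ.grZ_natCast]
    exact hq₂
  · exact zero_mem _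

end QuadraticExtension

theorem statement7_general {Q P : Type} [Ring Q] [Algebra ℚ Q] [Ring P] [Algebra ℚ P]
    (SQ : CDGAStruct Q) (SP : CDGAStruct P) (n k : ℕ) (hk : 1 ≤ k)
    (hQPD : IsPDCDGA SQ ((n : ℤ) - 2 * k))
    (e : Q)
    (ι : Q →ₗ[ℚ] P) (hι : IsCDGAHom SQ SP ι)
    (z : P) (hz : z ∈ SP.gr (2 * k)) (hdz : SP.d z = 0) (hzsq : z * z = ι e * z)
    (hfree : ∀ p : P, ∃! qq : Q × Q, p = ι qq.1 + ι qq.2 * z)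
    (hgrch : ∀ i : ℕ, ∀ p ∈ SP.gr i, ∃ q₁ q₂ : Q,
      p = ι q₁ + ι q₂ * z ∧ q₁ ∈ SQ.gr i ∧
        ((2 * k ≤ i ∧ q₂ ∈ SQ.gr (i - 2 * k)) ∨ q₂ = 0)) :
    IsPDCDGA SP (n : ℤ) := by
  obtain ⟨εQ, hεQ⟩ := hQPD.exists_isPerfectOrientation
  obtain ⟨hQc, hQft, -⟩ := hQPD
  let L : Q × Q →ₗ[ℚ] P :=
    ι ∘ₗ LinearMap.fst ℚ Q Q + LinearMap.mulRight ℚ z ∘ₗ ι ∘ₗ LinearMap.snd ℚ Q Q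
  let E := LinearEquiv.ofBijective L <| Function.bijective_iff_existsUnique L |>.mpr
    fun p => by simpa [L, eq_comm] using hfree p
  have hE (qq : Q × Q) : E qq = ι qq.1 + ι qq.2 * z := rfl
  have hgr := extension_coords_mem_grZ hE hgrch
  exact isPDCDGA_of_isPerfectOrientation (connected_of_extension hι hk hE hgr hQc)
    (finiteType_of_extension hgr hQft) (isPerfectOrientation_of_extension hι hz hdz hzsq hE hgr hεQ)

/-- Let `Q` be a Poincaré duality CDGA in dimension `n - 2k`
(with `k ≥ 1`), and let `e ∈ Q^{2k}` be a cocycle. Let `z̄` be a generator of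
even degree `2k` and define `P := (Q ⊗ Λz̄)/(z̄² - e·z̄)` with differential
extending `d_Q` and `D(z̄) = 0`. Then `P` is a Poincaré duality CDGA in
dimension `n`; as graded vector spaces `P ≅ Q ⊕ z̄·Q`.  (The algebra `P` is
presented abstractly: a CDGA `P` with a CDGA morphism `ι : Q → P` and an
element `z ∈ P^{2k}` with `dz = 0`, `z² = ι(e)·z`, such that every element of
`P` is uniquely `ι(q₁) + ι(q₂)·z`, compatibly with the gradings.) -/
theorem statement7 {Q P : Type} [Ring Q] [Algebra ℚ Q] [Ring P] [Algebra ℚ P]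
    (SQ : CDGAStruct Q) (SP : CDGAStruct P) (n k : ℕ) (hk : 1 ≤ k)
    (hQPD : IsPDCDGA SQ ((n : ℤ) - 2 * k))
    (e : Q) (he : e ∈ SQ.gr (2 * k)) (hde : SQ.d e = 0)
    (ι : Q →ₗ[ℚ] P) (hι : IsCDGAHom SQ SP ι)
    (z : P) (hz : z ∈ SP.gr (2 * k)) (hdz : SP.d z = 0) (hzsq : z * z = ι e * z)
    (hfree : ∀ p : P, ∃! qq : Q × Q, p = ι qq.1 + ι qq.2 * z)
    (hgrch : ∀ i : ℕ, ∀ p ∈ SP.gr i, ∃ q₁ q₂ : Q,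
      p = ι q₁ + ι q₂ * z ∧ q₁ ∈ SQ.gr i ∧
        ((2 * k ≤ i ∧ q₂ ∈ SQ.gr (i - 2 * k)) ∨ q₂ = 0)) :
    IsPDCDGA SP (n : ℤ) :=
  statement7_general SQ SP n k hk hQPD e ι hι z hz hdz hzsq hfree hgrch
end

section
/- Let Q be a Poincaré duality CDGA in dimension n − 2k, e ∈ Q^{2k} a cocycle, P := (Q ⊗ Λz̄)/(z̄² − e·z̄) with deg z̄ = 2k and D(z̄) = 0, and let Φ : s^{-2k}Q → P be the P-dgmodule morphism Φ(s^{-2k}q) = q·z̄ (with P acting on s^{-2k}Q via φ(q₁ + q₂ z̄) = q₁ + e q₂). Then the natural inclusion Q ↪ P ↪ P ⊕_{Φ} ss^{-2k}Q, q ↦ (q, 0), is a quasi-isomorphism of CDGAs, where the mapping cone carries the semi-trivial CDGA structure. -/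
section auxForStatement11

lemma grZ_of_nonneg {A : Type} [Ring A] [Algebra ℚ A] (S : CDGAStruct A) {j : ℤ}
    (h : 0 ≤ j) : S.grZ j = S.gr j.toNat := if_pos h

lemma grZ_neg' {A : Type} [Ring A] [Algebra ℚ A] (S : CDGAStruct A) {j : ℤ}
    (h : j < 0) : S.grZ j = ⊥ := if_neg (not_le.mpr h)

lemma grZ_natCast' {A : Type} [Ring A] [Algebra ℚ A] (S : CDGAStruct A) (i : ℕ) :
    S.grZ (i : ℤ) = S.gr i := by
  rw [grZ_of_nonneg S (by positivity), Int.toNat_natCast]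

end auxForStatement11

/-- Let `Q` be a Poincaré duality CDGA in dimension `n - 2k`,
`e ∈ Q^{2k}` a cocycle, `P := (Q ⊗ Λz̄)/(z̄² - e·z̄)` with `deg z̄ = 2k`,
`D(z̄) = 0`, and let `Φ : s^{-2k}Q → P` be the `P`-dgmodule morphism
`Φ(s^{-2k}q) = q·z̄` (with `P` acting on `s^{-2k}Q` via
`φ(q₁ + q₂·z̄) = q₁ + e·q₂`). Then the natural inclusion
`Q ↪ P ↪ P ⊕_Φ ss^{-2k}Q`, `q ↦ (q, 0)`, is a quasi-isomorphism of CDGAs,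
where the mapping cone carries the semi-trivial CDGA structure. -/
theorem statement11 {Q P : Type} [Ring Q] [Algebra ℚ Q] [Ring P] [Algebra ℚ P]
    (SQ : CDGAStruct Q) (SP : CDGAStruct P) (n k : ℕ) (hk : 1 ≤ k)
    (hQPD : IsPDCDGA SQ ((n : ℤ) - 2 * k))
    (e : Q) (he : e ∈ SQ.gr (2 * k)) (hde : SQ.d e = 0)
    (ι : Q →ₗ[ℚ] P) (hι : IsCDGAHom SQ SP ι)
    (z : P) (hz : z ∈ SP.gr (2 * k)) (hdz : SP.d z = 0) (hzsq : z * z = ι e * z)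
    (hfree : ∀ p : P, ∃! qq : Q × Q, p = ι qq.1 + ι qq.2 * z)
    (hgrch : ∀ i : ℕ, ∀ p ∈ SP.gr i, ∃ q₁ q₂ : Q,
      p = ι q₁ + ι q₂ * z ∧ q₁ ∈ SQ.gr i ∧
        ((2 * k ≤ i ∧ q₂ ∈ SQ.gr (i - 2 * k)) ∨ q₂ = 0))
    (φ : P →ₗ[ℚ] Q)
    (hφdef : ∀ q₁ q₂ : Q, φ (ι q₁ + ι q₂ * z) = q₁ + e * q₂)
    -- `s^{-2k}Q` as a `P`-dgmodule via `φ`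
    (SM : DGModStruct SP Q)
    (hSMgr : ∀ j : ℤ, SM.gr j = SQ.grZ (j - 2 * k))
    (hSMsmul : ∀ (p : P) (m : Q), SM.smul p m = φ p * m)
    (hSMd : ∀ m : Q, SM.d m = SQ.d m)
    -- the semi-trivial CDGA structure on the cone `P ⊕_Φ ss^{-2k}Q`
    (μ : P × Q →ₗ[ℚ] P × Q →ₗ[ℚ] P × Q) (hμ : SemiTrivialMul SP SM μ) :
    IsGradedDGAHom SQ.grZ 1 (LinearMap.mul ℚ Q) SQ.d
      (coneGr SP SM) ((1 : P), (0 : Q)) μ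
      (coneD SP SM (LinearMap.mulRight ℚ z ∘ₗ ι)) (ι.prod 0) ∧
    IsQuasiIsoGr SQ.grZ SQ.d (coneGr SP SM)
      (coneD SP SM (LinearMap.mulRight ℚ z ∘ₗ ι)) (ι.prod 0) := by
  obtain ⟨hι1, hιmul, hιgr, hιd⟩ := hι
  obtain ⟨hμ1, hμ2, hμ3, hμ4⟩ := hμ
  set Φ : Q →ₗ[ℚ] P := LinearMap.mulRight ℚ z ∘ₗ ι with hΦ
  have hconeD : ∀ x : P × Q,
      coneD SP SM Φ x = (SP.d x.1 + ι x.2 * z, -(SM.d x.2)) := fun x => rfl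
  have hf : ∀ q : Q, (ι.prod 0) q = (ι q, (0 : Q)) := fun q => rfl
  have huniq : ∀ a b a' b' : Q, ι a + ι b * z = ι a' + ι b' * z → a = a' ∧ b = b' := by
    intro a b a' b' hEq
    have h1 : ι a + ι b * z = ι (a, b).1 + ι (a, b).2 * z := rfl
    have h2 : ι a + ι b * z = ι (a', b').1 + ι (a', b').2 * z := hEq
    have := (hfree (ι a + ι b * z)).unique h1 h2
    exact ⟨congrArg Prod.fst this, congrArg Prod.snd this⟩
  have hdlz : ∀ (i : ℕ) (q : Q), q ∈ SQ.gr i → SP.d (ι q * z) = ι (SQ.d q) * z := by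
    intro i q hq
    rw [SP.leibniz _ z (hιgr i q hq), hdz, mul_zero, smul_zero, add_zero, ← hιd]
  have hdec : ∀ (i : ℕ) (p : P), p ∈ SP.gr i → ∃ q₁ q₂ : Q,
      p = ι q₁ + ι q₂ * z ∧ q₁ ∈ SQ.gr i ∧
      SP.d p = ι (SQ.d q₁) + ι (SQ.d q₂) * z ∧
      ((2 * k ≤ i ∧ q₂ ∈ SQ.gr (i - 2 * k)) ∨ q₂ = 0) := by
    intro i p hp
    obtain ⟨q₁, q₂, hpe, hq₁, hq₂⟩ := hgrch i p hp
    refine ⟨q₁, q₂, hpe, hq₁, ?_, hq₂⟩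
    have h2 : SP.d (ι q₂ * z) = ι (SQ.d q₂) * z := by
      rcases hq₂ with ⟨_, hm⟩ | rfl
      · exact hdlz _ _ hm
      · simp
    rw [hpe, map_add, h2, ← hιd]
  constructor
  · refine ⟨?_, ?_, ?_, ?_⟩
    · rw [hf, hι1]
    · intro x y
      have hL : (ι.prod 0) ((LinearMap.mul ℚ Q) x y) = (ι x * ι y, (0 : Q)) := by
        rw [show (LinearMap.mul ℚ Q) x y = x * y from rfl, hf, hιmul]
      rw [hL, hf, hf, hμ1]
    · intro j x hx
      refine Submodule.mem_prod.mpr ⟨?_, Submodule.zero_mem _⟩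
      by_cases hj : 0 ≤ j
      · rw [grZ_of_nonneg SP hj]
        rw [grZ_of_nonneg SQ hj] at hx
        exact hιgr _ x hx
      · rw [grZ_neg' SQ (by omega)] at hx
        rw [Submodule.mem_bot] at hx
        rw [hx, map_zero]
        exact Submodule.zero_mem _
    · intro x
      rw [hf, hf, hconeD]
      show (ι (SQ.d x), (0 : Q)) = (SP.d (ι x) + ι 0 * z, -(SM.d 0))
      rw [map_zero, zero_mul, add_zero, map_zero, neg_zero, hιd]
  · intro j
    constructor
    · rintro ⟨p, m⟩ ⟨hmem, hcoc⟩
      obtain ⟨hp, hm⟩ := Submodule.mem_prod.mp hmem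
      rw [hSMgr] at hm
      have hc' : (SP.d p + ι m * z, -(SM.d m)) = ((0 : P), (0 : Q)) :=
        (hconeD (p, m)).symm.trans hcoc
      have hc1 : SP.d p + ι m * z = 0 := congrArg Prod.fst hc'
      by_cases hj : 0 ≤ j
      · rw [grZ_of_nonneg SP hj] at hp
        obtain ⟨q₁, q₂, hpe, hq₁, hdp, hq₂⟩ := hdec j.toNat p hp
        have key : ι (SQ.d q₁) + ι (SQ.d q₂ + m) * z = ι 0 + ι 0 * z := by
          rw [map_zero, zero_mul, add_zero, map_add, add_mul, ← add_assoc, ← hdp]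
          exact hc1
        obtain ⟨hd1, hd2⟩ := huniq _ _ _ _ key
        have hm' : m = -SQ.d q₂ := eq_neg_of_add_eq_zero_right hd2
        refine ⟨q₁, ⟨by rw [grZ_of_nonneg SQ hj]; exact hq₁, hd1⟩, (0, -q₂), ?_, ?_⟩
        · refine Submodule.mem_prod.mpr ⟨Submodule.zero_mem _, ?_⟩
          rw [show j - 1 + 1 = j by ring, hSMgr]
          rcases hq₂ with ⟨hki, hq₂m⟩ | rfl
          · have hjt : (j.toNat : ℤ) = j := Int.toNat_of_nonneg hj
            rw [show j - 2 * (k : ℤ) = ((j.toNat - 2 * k : ℕ) : ℤ) by omega,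
              grZ_natCast']
            exact neg_mem hq₂m
          · rw [neg_zero]; exact Submodule.zero_mem _
        · rw [hconeD, hf]
          show (SP.d 0 + ι (-q₂) * z, -(SM.d (-q₂))) = (ι q₁ - p, (0 : Q) - m)
          rw [hpe, hm', hSMd, map_zero, zero_add, map_neg, neg_mul, map_neg, neg_neg,
            zero_sub, neg_neg]
          congr 1
          abel
      · rw [grZ_neg' SP (by omega), Submodule.mem_bot] at hp
        rw [grZ_neg' SQ (by omega), Submodule.mem_bot] at hm
        subst hp; subst hm
        refine ⟨0, ⟨Submodule.zero_mem _, map_zero _⟩, 0, Submodule.zero_mem _, ?_⟩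
        simp
    · rintro x ⟨hxg, hxd⟩ ⟨⟨p', m'⟩, hwmem, hwd⟩
      obtain ⟨hp', hm'⟩ := Submodule.mem_prod.mp hwmem
      have hw' : (SP.d p' + ι m' * z, -(SM.d m')) = (ι x, (0 : Q)) :=
        (hconeD (p', m')).symm.trans hwd
      have hw1 : SP.d p' + ι m' * z = ι x := congrArg Prod.fst hw'
      by_cases hj1 : 0 ≤ j - 1
      · rw [grZ_of_nonneg SP hj1] at hp'
        obtain ⟨q₁, q₂, hpe, hq₁, hdp, hq₂⟩ := hdec (j - 1).toNat p' hp'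
        have key : ι (SQ.d q₁) + ι (SQ.d q₂ + m') * z = ι x + ι 0 * z := by
          rw [map_zero, zero_mul, add_zero, map_add, add_mul, ← add_assoc, ← hdp]
          exact hw1
        obtain ⟨hd1, _⟩ := huniq _ _ _ _ key
        exact ⟨q₁, by rw [grZ_of_nonneg SQ hj1]; exact hq₁, hd1⟩
      · rw [grZ_neg' SP (by omega), Submodule.mem_bot] at hp'
        subst hp'
        have key : ι (0 : Q) + ι m' * z = ι x + ι 0 * z := by
          rw [map_zero, zero_mul, add_zero, zero_add]
          rw [map_zero, zero_add] at hw1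
          exact hw1
        obtain ⟨hd1, _⟩ := huniq _ _ _ _ key
        exact ⟨0, Submodule.zero_mem _, by rw [map_zero, ← hd1]⟩
end
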